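/- arXiv:2209.03780 — 2 statements merged into one kernel-verified Lean document; each statement's English description precedes it below -/
import Mathlib

section
/- Let M and N be commuting square matrices (over ℂ) with spectral radius less than 1, and define f(M,N) := Σ_{n=2}^∞ ((−1)^{n+1}/n) Σ_{k=1}^{n−1} M^k N^{n−k}. If M − N is invertible, then f(M,N) = (M − N)^{-1} [ N·log(I + M) − M·log(I + N) ], where log(I + X) := Σ_{n≥1} (−1)^{n+1} Xⁿ/n. -/
open scoped BigOperators

noncomputable section

/-- log(I + X) := Σ_{n≥1} (−1)^{n+1} Xⁿ/n for square complex matrices. -/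
def matLog {d : ℕ} (X : Matrix (Fin d) (Fin d) ℂ) : Matrix (Fin d) (Fin d) ℂ :=
  ∑' n : ℕ, if 1 ≤ n then (((-1 : ℂ) ^ (n + 1) / n) • X ^ n) else 0

/-- f(M,N) := Σ_{n=2}^∞ ((−1)^{n+1}/n) Σ_{k=1}^{n−1} M^k N^{n−k}. -/
def fMN {d : ℕ} (M N : Matrix (Fin d) (Fin d) ℂ) : Matrix (Fin d) (Fin d) ℂ :=
  ∑' n : ℕ, if 2 ≤ n then
    (((-1 : ℂ) ^ (n + 1) / n) • ∑ k ∈ Finset.Ico 1 n, M ^ k * N ^ (n - k)) else 0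

/-!
Multiplying the `n`-th term of `f(M,N)` by `M - N` telescopes, since `M` and `N` commute:
`(M - N) ∑_{k=1}^{n-1} M^k N^{n-k} = M^n N - M N^n`. Hence `(M - N) f(M,N)` is the termwise
difference of `N log(I + M)` and `M log(I + N)`. Rearranging the series is legitimate because,
by Gelfand's formula, `‖Mⁿ‖` and `‖Nⁿ‖` decay geometrically, and the norms of the terms of
`f(M,N)` are dominated by the Cauchy product of these two summable sequences.
-/

open Finset Filter

def logCoeff (n : ℕ) : ℂ := (-1) ^ (n + 1) / n

theorem norm_logCoeff_le_one (n : ℕ) : ‖logCoeff n‖ ≤ 1 := by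
  rw [logCoeff, norm_div, norm_pow, norm_neg, norm_one, one_pow, Complex.norm_natCast]
  rcases n.eq_zero_or_pos with rfl | hn
  · simp
  · exact div_le_one_of_le₀ (by exact_mod_cast hn) n.cast_nonneg

theorem Commute.sub_mul_sum_Ico_pow_mul_pow {R : Type*} [Ring R] {a b : R} (h : Commute a b)
    (n : ℕ) : (a - b) * ∑ k ∈ Ico 1 (n + 1), a ^ k * b ^ (n + 1 - k) =
      a ^ (n + 1) * b - a * b ^ (n + 1) := by
  have hsum : ∑ k ∈ Ico 1 (n + 1), a ^ k * b ^ (n + 1 - k) =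
      a * (∑ i ∈ range n, a ^ i * b ^ (n - 1 - i)) * b := by
    rw [sum_Ico_eq_sum_range, Nat.add_sub_cancel, mul_sum, sum_mul]
    refine sum_congr rfl fun i hi => ?_
    rw [show n + 1 - (1 + i) = n - 1 - i + 1 by have := mem_range.mp hi; omega,
      pow_add, pow_one, pow_succ, mul_assoc, mul_assoc, mul_assoc]
  rw [hsum]
  calc (a - b) * (a * (∑ i ∈ range n, a ^ i * b ^ (n - 1 - i)) * b)
      = a * ((a - b) * ∑ i ∈ range n, a ^ i * b ^ (n - 1 - i)) * b := by
        rw [← mul_assoc, ← mul_assoc, ((Commute.refl a).sub_left h.symm).eq, mul_assoc a]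
    _ = a ^ (n + 1) * b - a * b ^ (n + 1) := by
        rw [h.mul_geom_sum₂, mul_sub, sub_mul, ← pow_succ', mul_assoc a, ← pow_succ]

section Series

variable {A : Type*} [Ring A] [Algebra ℂ A]

def logTerm (a : A) (n : ℕ) : A := if 1 ≤ n then logCoeff n • a ^ n else 0

def fMNTerm (a b : A) (n : ℕ) : A :=
  if 2 ≤ n then logCoeff n • ∑ k ∈ Ico 1 n, a ^ k * b ^ (n - k) else 0

theorem Commute.sub_mul_fMNTerm {a b : A} (h : Commute a b) (n : ℕ) :
    (a - b) * fMNTerm a b n = b * logTerm a n - a * logTerm b n := by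
  rcases n with _ | _ | n
  · simp [fMNTerm, logTerm]
  · simp [fMNTerm, logTerm, h.eq]
  · simp only [fMNTerm, logTerm, le_add_iff_nonneg_left, zero_le, if_true, mul_smul_comm,
      h.sub_mul_sum_Ico_pow_mul_pow, ← smul_sub, (h.pow_left _).eq]

end Series

section Summability

variable {A : Type*} [NormedRing A] [NormedAlgebra ℂ A]

theorem norm_logCoeff_smul_le (n : ℕ) (x : A) : ‖logCoeff n • x‖ ≤ ‖x‖ :=
  (norm_smul_le _ _).trans (mul_le_of_le_one_left (norm_nonneg x) (norm_logCoeff_le_one n))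

variable [CompleteSpace A]

theorem summable_norm_pow_of_spectralRadius_lt_one {a : A}
    (ha : spectralRadius ℂ a < 1) : Summable fun n => ‖a ^ n‖ := by
  obtain ⟨r, hρr, hr1⟩ := ENNReal.lt_iff_exists_nnreal_btwn.mp ha
  replace hr1 : (r : ℝ) < 1 := by exact_mod_cast hr1
  refine .of_norm_bounded_eventually_nat (summable_geometric_of_lt_one r.coe_nonneg hr1) ?_
  have hroot :=
    (spectrum.pow_nnnorm_pow_one_div_tendsto_nhds_spectralRadius a).eventually_lt_const hρr
  filter_upwards [hroot, eventually_gt_atTop 0] with n hn hn_pos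
  rw [one_div, ENNReal.rpow_inv_lt_iff (by positivity), ENNReal.rpow_natCast,
    ← ENNReal.coe_pow, ENNReal.coe_lt_coe] at hn
  simpa using (NNReal.coe_lt_coe.mpr hn).le

theorem summable_logTerm {a : A} (ha : Summable fun n => ‖a ^ n‖) : Summable (logTerm a) := by
  refine .of_norm_bounded ha fun n => ?_
  unfold logTerm
  split_ifs
  · exact norm_logCoeff_smul_le n _
  · simp

theorem summable_fMNTerm {a b : A} (ha : Summable fun n => ‖a ^ n‖)
    (hb : Summable fun n => ‖b ^ n‖) : Summable (fMNTerm a b) := by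
  have hcauchy : Summable fun n => ∑ k ∈ range (n + 1), ‖a ^ k‖ * ‖b ^ (n - k)‖ :=
    summable_sum_mul_range_of_summable_mul (f := (‖a ^ ·‖)) (g := (‖b ^ ·‖))
      (ha.mul_of_nonneg hb (fun _ => norm_nonneg _) fun _ => norm_nonneg _)
  refine .of_norm_bounded hcauchy fun n => ?_
  have hterm : ‖logCoeff n • ∑ k ∈ Ico 1 n, a ^ k * b ^ (n - k)‖ ≤
      ∑ k ∈ range (n + 1), ‖a ^ k‖ * ‖b ^ (n - k)‖ :=
    calc ‖logCoeff n • ∑ k ∈ Ico 1 n, a ^ k * b ^ (n - k)‖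
        ≤ ∑ k ∈ Ico 1 n, ‖a ^ k‖ * ‖b ^ (n - k)‖ :=
          (norm_logCoeff_smul_le n _).trans <|
            (norm_sum_le _ _).trans <| sum_le_sum fun _ _ => norm_mul_le _ _
      _ ≤ ∑ k ∈ range (n + 1), ‖a ^ k‖ * ‖b ^ (n - k)‖ :=
          sum_le_sum_of_subset_of_nonneg
            (fun k hk => mem_range.mpr (by have := mem_Ico.mp hk; omega))
            fun _ _ _ => by positivity
  unfold fMNTerm
  split_ifs
  · exact hterm
  · simpa using sum_nonneg fun k _ => by positivity

end Summability

section Matrix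

variable {n : Type*} [Fintype n] [DecidableEq n]

-- Any Banach algebra norm will do: the conclusions below do not mention it.
attribute [local instance] Matrix.linftyOpNormedRing Matrix.linftyOpNormedAlgebra

theorem Matrix.summable_logTerm {X : Matrix n n ℂ} (hX : spectralRadius ℂ X < 1) :
    Summable (logTerm X) :=
  _root_.summable_logTerm (summable_norm_pow_of_spectralRadius_lt_one hX)

theorem Matrix.summable_fMNTerm {M N : Matrix n n ℂ} (hM : spectralRadius ℂ M < 1)
    (hN : spectralRadius ℂ N < 1) : Summable (fMNTerm M N) :=
  _root_.summable_fMNTerm (summable_norm_pow_of_spectralRadius_lt_one hM)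
    (summable_norm_pow_of_spectralRadius_lt_one hN)

end Matrix

theorem fMN_eq_log_formula {d : ℕ}
    (M N : Matrix (Fin d) (Fin d) ℂ)
    (hcomm : M * N = N * M)
    (hM : spectralRadius ℂ M < 1) (hN : spectralRadius ℂ N < 1)
    (hMN : IsUnit (M - N)) :
    fMN M N = (M - N)⁻¹ * (N * matLog M - M * matLog N) := by
  have hmul : (M - N) * fMN M N = N * matLog M - M * matLog N := by
    change (M - N) * ∑' n, fMNTerm M N n = N * ∑' n, logTerm M n - M * ∑' n, logTerm N n
    rw [← (Matrix.summable_fMNTerm hM hN).tsum_mul_left,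
      tsum_congr (Commute.sub_mul_fMNTerm hcomm),
      ((Matrix.summable_logTerm hM).mul_left N).tsum_sub ((Matrix.summable_logTerm hN).mul_left M),
      (Matrix.summable_logTerm hM).tsum_mul_left, (Matrix.summable_logTerm hN).tsum_mul_left]
  rw [← hmul]
  exact (Matrix.nonsing_inv_mul_cancel_left _ _ ((Matrix.isUnit_iff_isUnit_det _).mp hMN)).symm
end
end

section
/- Let P_A and P_B be commuting orthogonal projections on a Hilbert space H, and let σ be a bounded operator on H ⊕ H that commutes with diag(P_A, P_B) and with diag(P_A∩B, P_A∩B), where P_{A∩B} := P_A P_B. Write Q := diag(P_A, P_B) and let f be a polynomial with f(0) = 0. Then f(Qσ)Q = diag(P_A(I−P_B), P_B(I−P_A)) · diag(f(σ_AA), f(σ_BB)) + P̂_{A∩B} f(σ), where σ_AA, σ_BB are the diagonal blocks of σ and P̂_{A∩B} := diag(P_{A∩B}, P_{A∩B}), provided σ is block-diagonalized by I − P̂_{A∩B} (i.e., the off-diagonal blocks σ_AB, σ_BA satisfy σ_AB = P_{A∩B} σ_AB P_{A∩B} and σ_BA = P_{A∩B} σ_BA P_{A∩B}). -/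
set_option linter.unusedSectionVars false
set_option linter.unusedVariables false


open Polynomial

/- STATEMENT 6: projection decomposition rule (Eq. (25)).  H a Hilbert space,
P_A, P_B commuting orthogonal projections, σ a bounded operator on H ⊕ H
(written as a 2×2 matrix of operators) commuting with Q = diag(P_A, P_B) and
with diag(P_{A∩B}, P_{A∩B}); its off-diagonal blocks live on the overlap.
Then for any polynomial f with f(0) = 0,
f(Qσ)Q = diag(P_A(I−P_B) f(σ_AA), P_B(I−P_A) f(σ_BB)) + P̂_{A∩B} f(σ). -/

open Polynomial

private lemma pow_mul_idem {A : Type*} [Ring A] (q : A) (hq : q * q = q) :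
    ∀ n, q ^ n * q = q
  | 0 => by simp
  | n + 1 => by rw [pow_succ, mul_assoc, hq, pow_mul_idem q hq n]

private lemma idem_mul_pow {A : Type*} [Ring A] (e a : A) (he : e * e = e)
    (hc : e * a = a * e) : ∀ n, e * a ^ n = (e * a) ^ n * e
  | 0 => by simp
  | n + 1 => by
    rw [pow_succ, ← mul_assoc, idem_mul_pow e a he hc n, pow_succ, mul_assoc, mul_assoc]
    congr 1
    rw [mul_assoc, ← hc, ← mul_assoc, he]

private lemma idem_mul_aeval {A : Type*} [Ring A] [Algebra ℂ A] (e a : A)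
    (he : e * e = e) (hc : e * a = a * e) (f : ℂ[X]) :
    e * aeval a f = aeval (e * a) f * e := by
  rw [Polynomial.aeval_eq_sum_range, Polynomial.aeval_eq_sum_range, Finset.mul_sum,
    Finset.sum_mul]
  exact Finset.sum_congr rfl fun i _ => by
    rw [mul_smul_comm, smul_mul_assoc, idem_mul_pow e a he hc i]

private lemma aeval_idem_mul {A : Type*} [Ring A] [Algebra ℂ A] (q a : A)
    (hq : q * q = q) (hc : a * q = q * a) (f : ℂ[X]) :
    aeval (q * a) f * q = q * aeval a f := by
  rw [Polynomial.aeval_eq_sum_range, Polynomial.aeval_eq_sum_range, Finset.sum_mul,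
    Finset.mul_sum]
  refine Finset.sum_congr rfl fun i _ => ?_
  rw [smul_mul_assoc, mul_smul_comm]
  congr 1
  have hcomm : Commute q a := hc.symm
  rw [hcomm.mul_pow, mul_assoc, ((hcomm.symm).pow_left i).eq, ← mul_assoc,
    pow_mul_idem q hq i]

section DiagHom
variable (L : Type*) [Ring L] [Algebra ℂ L]

private lemma d_one : (!![(1:L),0;0,1]) = 1 := by
  ext i j; fin_cases i <;> fin_cases j <;> simp [Matrix.one_fin_two]

private lemma d_mul (a b c d : L) :
    (!![a,0;0,b] * !![c,0;0,d]) = !![a*c,0;0,b*d] := by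
  ext i j; fin_cases i <;> fin_cases j <;> simp [Matrix.mul_apply, Fin.sum_univ_two]

private lemma d_zero : (!![(0:L),0;0,0]) = 0 := by
  ext i j; fin_cases i <;> fin_cases j <;> simp

private lemma d_add (a b c d : L) :
    (!![a,0;0,b] + !![c,0;0,d]) = !![a+c,0;0,b+d] := by
  ext i j; fin_cases i <;> fin_cases j <;> simp

private lemma d_alg (r : ℂ) :
    (!![algebraMap ℂ L r,0;0,algebraMap ℂ L r])
      = algebraMap ℂ (Matrix (Fin 2) (Fin 2) L) r := by
  rw [Matrix.algebraMap_eq_diagonal]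
  ext i j; fin_cases i <;> fin_cases j <;> simp

private def diagHom : (L × L) →ₐ[ℂ] Matrix (Fin 2) (Fin 2) L where
  toFun p := !![p.1, 0; 0, p.2]
  map_one' := d_one L
  map_mul' p q := (d_mul L p.1 p.2 q.1 q.2).symm
  map_zero' := d_zero L
  map_add' p q := (d_add L p.1 p.2 q.1 q.2).symm
  commutes' r := d_alg L r

private lemma diagHom_apply (a b : L) : diagHom L (a, b) = !![a,0;0,b] := rfl

end DiagHom

theorem projection_decomposition_rule
    {H : Type*} [NormedAddCommGroup H] [InnerProductSpace ℂ H] [CompleteSpace H]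
    (PA PB : H →L[ℂ] H)
    (hPAsa : IsSelfAdjoint PA) (hPBsa : IsSelfAdjoint PB)
    (hPA : PA * PA = PA) (hPB : PB * PB = PB)
    (hABcomm : PA * PB = PB * PA)
    (σ : Matrix (Fin 2) (Fin 2) (H →L[ℂ] H))
    (Q : Matrix (Fin 2) (Fin 2) (H →L[ℂ] H))
    (hQ : Q = !![PA, 0; 0, PB])
    (Phat : Matrix (Fin 2) (Fin 2) (H →L[ℂ] H))
    (hPhat : Phat = !![PA * PB, 0; 0, PA * PB])
    (hσQ : σ * Q = Q * σ) (hσPhat : σ * Phat = Phat * σ)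
    (hoff01 : σ 0 1 = (PA * PB) * σ 0 1 * (PA * PB))
    (hoff10 : σ 1 0 = (PA * PB) * σ 1 0 * (PA * PB))
    (f : Polynomial ℂ) (hf : f.coeff 0 = 0) :
    (Polynomial.aeval (Q * σ)) f * Q =
      !![PA * (1 - PB) * (Polynomial.aeval (σ 0 0)) f, 0;
         0, PB * (1 - PA) * (Polynomial.aeval (σ 1 1)) f] +
        Phat * (Polynomial.aeval σ) f := by
  -- basic projection algebra (P := PA * PB)
  have hAP : PA * (PA * PB) = PA * PB := by rw [← mul_assoc, hPA]
  have hPA' : (PA * PB) * PA = PA * PB := by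
    rw [mul_assoc, ← hABcomm, ← mul_assoc, hPA]
  have hBP : PB * (PA * PB) = PA * PB := by
    rw [← mul_assoc, ← hABcomm, mul_assoc, hPB]
  have hPB' : (PA * PB) * PB = PA * PB := by rw [mul_assoc, hPB]
  have hPP : (PA * PB) * (PA * PB) = PA * PB := by rw [mul_assoc PA PB, hBP, hAP]
  have hR0idem : (PA - PA * PB) * (PA - PA * PB) = PA - PA * PB := by
    rw [sub_mul, mul_sub, mul_sub, hPA, hAP, hPA', hPP]; abel
  have hR1idem : (PB - PA * PB) * (PB - PA * PB) = PB - PA * PB := by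
    rw [sub_mul, mul_sub, mul_sub, hPB, hBP, hPB', hPP]; abel
  have hR0P : (PA - PA * PB) * (PA * PB) = 0 := by rw [sub_mul, hAP, hPP, sub_self]
  have hR1P : (PB - PA * PB) * (PA * PB) = 0 := by rw [sub_mul, hBP, hPP, sub_self]
  -- entrywise commutation facts
  have hc00 : σ 0 0 * PA = PA * σ 0 0 := by
    have h := congrFun (congrFun hσQ 0) 0
    simpa [hQ, Matrix.mul_apply, Fin.sum_univ_two] using h
  have hc11 : σ 1 1 * PB = PB * σ 1 1 := by
    have h := congrFun (congrFun hσQ 1) 1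
    simpa [hQ, Matrix.mul_apply, Fin.sum_univ_two] using h
  have hp00 : σ 0 0 * (PA * PB) = (PA * PB) * σ 0 0 := by
    have h := congrFun (congrFun hσPhat 0) 0
    simpa [hPhat, Matrix.mul_apply, Fin.sum_univ_two] using h
  have hp11 : σ 1 1 * (PA * PB) = (PA * PB) * σ 1 1 := by
    have h := congrFun (congrFun hσPhat 1) 1
    simpa [hPhat, Matrix.mul_apply, Fin.sum_univ_two] using h
  have hcR0 : (PA - PA * PB) * σ 0 0 = σ 0 0 * (PA - PA * PB) := by
    rw [sub_mul, mul_sub, ← hc00, ← hp00]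
  have hcR1 : (PB - PA * PB) * σ 1 1 = σ 1 1 * (PB - PA * PB) := by
    rw [sub_mul, mul_sub, ← hc11, ← hp11]
  -- matrix-level facts
  have hQQ : Q * Q = Q := by rw [hQ, d_mul, hPA, hPB]
  have hRmat : Q - Phat = !![PA - PA * PB, 0; 0, PB - PA * PB] := by
    rw [hQ, hPhat]
    ext i j
    fin_cases i <;> fin_cases j <;> simp [Matrix.sub_apply]
  have hz01 : (PA - PA * PB) * σ 0 1 = 0 := by
    rw [hoff01, ← mul_assoc (PA - PA * PB) (PA * PB * σ 0 1) (PA * PB),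
      ← mul_assoc (PA - PA * PB) (PA * PB) (σ 0 1), hR0P, zero_mul, zero_mul]
  have hz10 : (PB - PA * PB) * σ 1 0 = 0 := by
    rw [hoff10, ← mul_assoc (PB - PA * PB) (PA * PB * σ 1 0) (PA * PB),
      ← mul_assoc (PB - PA * PB) (PA * PB) (σ 1 0), hR1P, zero_mul, zero_mul]
  have hRσ : !![PA - PA * PB, 0; 0, PB - PA * PB] * σ
      = !![(PA - PA * PB) * σ 0 0, 0; 0, (PB - PA * PB) * σ 1 1] := by
    ext i j
    fin_cases i <;> fin_cases j <;>
      simp [Matrix.mul_apply, Fin.sum_univ_two, hz01, hz10]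
  have hRcomm : !![PA - PA * PB, 0; 0, PB - PA * PB] * σ
      = σ * !![PA - PA * PB, 0; 0, PB - PA * PB] := by
    rw [← hRmat, sub_mul, mul_sub, hσQ, hσPhat]
  have hRR : !![PA - PA * PB, 0; 0, PB - PA * PB] * !![PA - PA * PB, 0; 0, PB - PA * PB]
      = !![PA - PA * PB, 0; 0, PB - PA * PB] := by
    rw [d_mul, hR0idem, hR1idem]
  -- product decomposition through the diagonal algebra hom
  have hprod : aeval (((PA - PA * PB) * σ 0 0, (PB - PA * PB) * σ 1 1)
        : (H →L[ℂ] H) × (H →L[ℂ] H)) f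
      = (aeval ((PA - PA * PB) * σ 0 0) f, aeval ((PB - PA * PB) * σ 1 1) f) := by
    refine Prod.ext ?_ ?_
    · exact (Polynomial.aeval_algHom_apply (AlgHom.fst ℂ _ _)
        (((PA - PA * PB) * σ 0 0, (PB - PA * PB) * σ 1 1)) f).symm
    · exact (Polynomial.aeval_algHom_apply (AlgHom.snd ℂ _ _)
        (((PA - PA * PB) * σ 0 0, (PB - PA * PB) * σ 1 1)) f).symm
  have key : !![PA - PA * PB, 0; 0, PB - PA * PB] * aeval σ f
      = !![(PA - PA * PB) * aeval (σ 0 0) f, 0; 0, (PB - PA * PB) * aeval (σ 1 1) f] := by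
    rw [idem_mul_aeval _ σ hRR hRcomm f, hRσ, ← diagHom_apply, ← diagHom_apply,
      Polynomial.aeval_algHom_apply, ← map_mul, hprod, Prod.mk_mul_mk, diagHom_apply,
      ← idem_mul_aeval (PA - PA * PB) (σ 0 0) hR0idem hcR0 f,
      ← idem_mul_aeval (PB - PA * PB) (σ 1 1) hR1idem hcR1 f]
  -- coefficients rewrite
  have e0 : PA * (1 - PB) = PA - PA * PB := by rw [mul_sub, mul_one]
  have e1 : PB * (1 - PA) = PB - PA * PB := by rw [mul_sub, mul_one, ← hABcomm]
  -- conclude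
  rw [aeval_idem_mul Q σ hQQ hσQ f, e0, e1, ← key, ← hRmat, sub_mul]
  abel
end
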